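/- Let X be a measurable space, let μ_a and μ_b be probability measures on X, let E be a real normed vector space, and let l : X × E → ℝ be such that for every θ ∈ E the function x ↦ l(x, θ) is integrable with respect to both μ_a and μ_b. Define L_a(θ) = ∫ l(x, θ) dμ_a(x), L_b(θ) = ∫ l(x, θ) dμ_b(x), and, for a fixed α ∈ (0,1), define L_n(θ) = ∫ l(x, θ) d(α·μ_a + (1−α)·μ_b)(x). Assume L_a and L_b are differentiable and strictly convex, that a ∈ E is a global minimizer of L_a, that b ∈ E is a global minimizer of L_b, and that a ≠ b. If θ* ∈ E is a global minimizer of L_n, then L_a(θ*) > L_a(a). -/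

import Mathlib

open MeasureTheory Set Filter Topology

/-! The mixture loss is `L_n = α L_a + (1 - α) L_b`. If `θ*` were optimal for `L_a`, strict
convexity would force `θ* = a`, where `L_a` has zero derivative. A local minimum of `f + g` at a
point where `f` has zero derivative is a global minimum of the convex function `g`, so `a` would
also minimize `L_b`, and strict convexity of `L_b` would give `a = b`. -/

theorem integral_ofReal_smul_add_ofReal_smul_measure {X G : Type*} [MeasurableSpace X]
    [NormedAddCommGroup G] [NormedSpace ℝ G] {μ ν : Measure X} {f : X → G}
    (hμ : Integrable f μ) (hν : Integrable f ν) {s t : ℝ} (hs : 0 ≤ s) (ht : 0 ≤ t) :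
    ∫ x, f x ∂(ENNReal.ofReal s • μ + ENNReal.ofReal t • ν) =
      s • ∫ x, f x ∂μ + t • ∫ x, f x ∂ν := by
  rw [integral_add_measure (hμ.smul_measure ENNReal.ofReal_ne_top)
      (hν.smul_measure ENNReal.ofReal_ne_top), integral_smul_measure, integral_smul_measure,
    ENNReal.toReal_ofReal hs, ENNReal.toReal_ofReal ht]

theorem ConvexOn.le_of_isLocalMin_add_of_hasDerivAt_zero {f g : ℝ → ℝ} {x y : ℝ}
    (hg : ConvexOn ℝ univ g) (hf : HasDerivAt f 0 x) (hmin : IsLocalMin (f + g) x)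
    (hxy : x < y) : g x ≤ g y := by
  have hf_slope : Tendsto (slope f x) (𝓝[>] x) (𝓝 0) :=
    (hasDerivAt_iff_tendsto_slope.1 hf).mono_left (nhdsGT_le_nhdsNE x)
  have hbound : ∀ᶠ t in 𝓝[>] x, -slope f x t ≤ slope g x y := by
    filter_upwards [nhdsWithin_le_nhds hmin, Ioo_mem_nhdsGT hxy] with t hmin_t ⟨hxt, hty⟩
    have hsum : 0 ≤ slope f x t + slope g x t := by
      rw [slope_def_field, slope_def_field, ← add_div]
      exact div_nonneg (by simp only [Pi.add_apply] at hmin_t; linarith) (by linarith)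
    have hmono : slope g x t ≤ slope g x y :=
      hg.monotoneOn_slope_gt (mem_univ x) ⟨mem_univ t, hxt⟩ ⟨mem_univ y, hxy⟩ hty.le
    linarith
  have hslope_nonneg := le_of_tendsto hf_slope.neg hbound
  rw [neg_zero, slope_def_field, le_div_iff₀ (sub_pos.2 hxy), zero_mul] at hslope_nonneg
  exact sub_nonneg.1 hslope_nonneg

theorem ConvexOn.isMinOn_of_isLocalMin_add_of_hasFDerivAt_zero {E : Type*}
    [NormedAddCommGroup E] [NormedSpace ℝ E] {f g : E → ℝ} {x : E}
    (hg : ConvexOn ℝ univ g) (hf : HasFDerivAt f (0 : E →L[ℝ] ℝ) x)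
    (hmin : IsLocalMin (f + g) x) : IsMinOn g univ x := by
  intro y _
  set ℓ : ℝ →ᵃ[ℝ] E := AffineMap.lineMap x y
  have hf_line : HasDerivAt (f ∘ ℓ) 0 0 := by
    simpa using hf.comp_hasDerivAt_of_eq (0 : ℝ) AffineMap.hasDerivAt_lineMap (by simp)
  have hmin_line : IsLocalMin ((f + g) ∘ ℓ) 0 := by
    refine IsLocalMin.comp_continuous ?_ AffineMap.lineMap_continuous.continuousAt
    simpa [ℓ] using hmin
  simpa [ℓ] using
    (hg.comp_affineMap ℓ).le_of_isLocalMin_add_of_hasDerivAt_zero hf_line hmin_line one_pos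

theorem mixture_expected_loss_minimizer_strictly_suboptimal_for_source_general
    {X : Type*} [MeasurableSpace X] (μa μb : Measure X)
    {E : Type*} [NormedAddCommGroup E] [NormedSpace ℝ E]
    (l : X × E → ℝ)
    (hla : ∀ θ : E, Integrable (fun x => l (x, θ)) μa)
    (hlb : ∀ θ : E, Integrable (fun x => l (x, θ)) μb)
    (La Lb : E → ℝ)
    (hLa : ∀ θ : E, La θ = ∫ x, l (x, θ) ∂μa)
    (hLb : ∀ θ : E, Lb θ = ∫ x, l (x, θ) ∂μb)
    (α : ℝ) (hα : α ∈ Set.Ioo (0 : ℝ) 1)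
    (Ln : E → ℝ)
    (hLn : ∀ θ : E,
      Ln θ = ∫ x, l (x, θ) ∂(ENNReal.ofReal α • μa + ENNReal.ofReal (1 - α) • μb))
    (hLad : Differentiable ℝ La)
    (hLac : StrictConvexOn ℝ Set.univ La) (hLbc : StrictConvexOn ℝ Set.univ Lb)
    (a b : E) (ha : ∀ θ : E, La a ≤ La θ) (hb : ∀ θ : E, Lb b ≤ Lb θ) (hab : a ≠ b)
    (θs : E) (hθs : ∀ θ : E, Ln θs ≤ Ln θ) :
    La θs > La a := by
  obtain ⟨hα_pos, hα_lt_one⟩ := hα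
  have h_one_sub_pos : 0 < 1 - α := sub_pos.2 hα_lt_one
  have hLn_mix : Ln = α • La + (1 - α) • Lb := funext fun θ => by
    rw [hLn, integral_ofReal_smul_add_ofReal_smul_measure (hla θ) (hlb θ) hα_pos.le
      h_one_sub_pos.le, ← hLa, ← hLb]; rfl
  by_contra! h_not_gt
  have hθs_eq : θs = a :=
    hLac.eq_of_isMinOn (fun θ _ => h_not_gt.trans (ha θ)) (fun θ _ => ha θ)
      (mem_univ _) (mem_univ _)
  rw [hθs_eq, hLn_mix] at hθs
  have hLa_deriv : HasFDerivAt (α • La) (0 : E →L[ℝ] ℝ) a := by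
    have hmin : IsLocalMin La a := Eventually.of_forall ha
    have h := (hLad a).hasFDerivAt
    rw [hmin.hasFDerivAt_eq_zero h] at h
    simpa using h.const_smul α
  have hLb_min : IsMinOn ((1 - α) • Lb) univ a :=
    (hLbc.convexOn.smul h_one_sub_pos.le).isMinOn_of_isLocalMin_add_of_hasFDerivAt_zero
      hLa_deriv (Eventually.of_forall hθs)
  refine hab (hLbc.eq_of_isMinOn (fun θ _ => ?_) (fun θ _ => hb θ) (mem_univ _) (mem_univ _))
  exact le_of_mul_le_mul_left (hLb_min (mem_univ θ)) h_one_sub_pos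

/-- The paper's Theorem 1 in its original expectation form: `L_a`, `L_b`, `L_n` are the
expected losses with respect to the source distribution `μa`, the target distribution
`μb`, and the mixture `α • μa + (1 - α) • μb`; if `θ*` globally minimizes the mixture
loss `L_n`, then it is strictly suboptimal for the source loss `L_a`. -/
theorem mixture_expected_loss_minimizer_strictly_suboptimal_for_source
    {X : Type*} [MeasurableSpace X] (μa μb : Measure X)
    [IsProbabilityMeasure μa] [IsProbabilityMeasure μb]
    {E : Type*} [NormedAddCommGroup E] [NormedSpace ℝ E]
    (l : X × E → ℝ)
    (hla : ∀ θ : E, Integrable (fun x => l (x, θ)) μa)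
    (hlb : ∀ θ : E, Integrable (fun x => l (x, θ)) μb)
    (La Lb : E → ℝ)
    (hLa : ∀ θ : E, La θ = ∫ x, l (x, θ) ∂μa)
    (hLb : ∀ θ : E, Lb θ = ∫ x, l (x, θ) ∂μb)
    (α : ℝ) (hα : α ∈ Set.Ioo (0 : ℝ) 1)
    (Ln : E → ℝ)
    (hLn : ∀ θ : E,
      Ln θ = ∫ x, l (x, θ) ∂(ENNReal.ofReal α • μa + ENNReal.ofReal (1 - α) • μb))
    (hLad : Differentiable ℝ La) (hLbd : Differentiable ℝ Lb)
    (hLac : StrictConvexOn ℝ Set.univ La) (hLbc : StrictConvexOn ℝ Set.univ Lb)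
    (a b : E) (ha : ∀ θ : E, La a ≤ La θ) (hb : ∀ θ : E, Lb b ≤ Lb θ) (hab : a ≠ b)
    (θs : E) (hθs : ∀ θ : E, Ln θs ≤ Ln θ) :
    La θs > La a :=
  mixture_expected_loss_minimizer_strictly_suboptimal_for_source_general μa μb l hla hlb La Lb hLa
    hLb α hα Ln hLn hLad hLac hLbc a b ha hb hab θs hθs
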